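/- The quartic polynomial p(t) = 157t^4 + 2842t^3 + 19212t^2 + 57990t + 67147 is irreducible over ℚ. -/

import Mathlib

/-!
Modulo 5 the quartic is `2 (X⁴ + X³ + X² + 1)`, and `X⁴ + X³ + X² + 1` is irreducible over `𝔽₅`:
it has no root and, by exhaustive search, no factorization into two monic quadratics.
As the integer quartic is primitive and `5 ∤ 157`, a factorization over `ℤ` would reduce to one
over `𝔽₅` with the same degrees, so it is irreducible over `ℤ`, hence over `ℚ` by Gauss's lemma.
-/

open Polynomial

namespace Polynomial

theorem isPrimitive_of_isCoprime_coeff {R : Type*} [CommSemiring R] {f : R[X]} {i j : ℕ}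
    (h : IsCoprime (f.coeff i) (f.coeff j)) : f.IsPrimitive := fun _ hr =>
  h.isUnit_of_dvd' ((C_dvd_iff_dvd_coeff _ _).mp hr i) ((C_dvd_iff_dvd_coeff _ _).mp hr j)

theorem IsPrimitive.irreducible_of_irreducible_map_of_map_leadingCoeff_ne_zero
    {R S : Type*} [CommRing R] [IsDomain R] [CommRing S] [IsDomain S] {φ : R →+* S}
    {f : R[X]} (hf : f.IsPrimitive) (hlc : φ f.leadingCoeff ≠ 0)
    (h_irr : Irreducible (f.map φ)) : Irreducible f := by
  have isUnit_of_dvd : ∀ g, g ∣ f → IsUnit (g.map φ) → IsUnit g := by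
    rintro g ⟨h, rfl⟩ hu
    have hg : φ g.leadingCoeff ≠ 0 := by
      rw [leadingCoeff_mul, map_mul] at hlc
      exact left_ne_zero_of_mul hlc
    have hdeg : g.natDegree = 0 := by
      rw [← natDegree_map_of_leadingCoeff_ne_zero φ hg]
      exact natDegree_eq_zero_of_isUnit hu
    rw [eq_C_of_natDegree_eq_zero hdeg] at hf ⊢
    exact isUnit_C.mpr (isPrimitive_iff_isUnit_of_C_dvd.mp (isPrimitive_of_dvd hf
      (dvd_mul_right _ _)) _ dvd_rfl)
  refine ⟨fun hu => h_irr.not_isUnit (hu.map (mapRingHom φ)), fun a b hab => ?_⟩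
  exact (h_irr.isUnit_or_isUnit (by rw [hab, Polynomial.map_mul])).imp
    (isUnit_of_dvd a (Dvd.intro _ hab.symm)) (isUnit_of_dvd b (Dvd.intro_left _ hab.symm))

theorem Monic.eq_X_sq_add_C_mul_X_add_C {R : Type*} [Semiring R] {q : R[X]} (hq : q.Monic)
    (h : q.natDegree = 2) : q = X ^ 2 + C (q.coeff 1) * X + C (q.coeff 0) := by
  ext (_ | _ | _ | n)
  · simp
  · simp
  · simpa [h] using hq.coeff_natDegree
  · rw [coeff_eq_zero_of_natDegree_lt (by omega)]
    simp

theorem Monic.irreducible_of_natDegree_eq_four {R : Type*} [CommRing R] [NoZeroDivisors R]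
    {f : R[X]} (hf : f.Monic) (hdeg : f.natDegree = 4) (hroot : ∀ x, f.eval x ≠ 0)
    (hquad : ∀ a b c d : R, f ≠ (X ^ 2 + C a * X + C b) * (X ^ 2 + C c * X + C d)) :
    Irreducible f := by
  refine hf.irreducible_iff_natDegree'.mpr ⟨fun h => by simp [h] at hdeg, ?_⟩
  rintro g q hg hq rfl hq_deg
  have hsum : g.natDegree + q.natDegree = 4 := hg.natDegree_mul hq ▸ hdeg
  rw [hdeg] at hq_deg
  obtain ⟨hq0, hq2⟩ := Finset.mem_Ioc.mp hq_deg
  interval_cases hqd : q.natDegree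
  · apply hroot (-q.coeff 0)
    rw [hq.eq_X_add_C hqd]
    simp
  · rw [hg.eq_X_sq_add_C_mul_X_add_C (by omega), hq.eq_X_sq_add_C_mul_X_add_C hqd] at hquad
    exact hquad _ _ _ _ rfl

end Polynomial

noncomputable def quarticInt : ℤ[X] :=
  157 * X ^ 4 + 2842 * X ^ 3 + 19212 * X ^ 2 + 57990 * X + 67147

instance : Fact (Nat.Prime 5) := ⟨by norm_num⟩

noncomputable def quarticModFive : (ZMod 5)[X] := X ^ 4 + X ^ 3 + X ^ 2 + 1

theorem quarticInt_isPrimitive : quarticInt.IsPrimitive :=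
  isPrimitive_of_isCoprime_coeff (i := 4) (j := 3) <| by
    rw [Int.isCoprime_iff_gcd_eq_one]
    simp [quarticInt, coeff_X]
    rfl

theorem quarticInt_leadingCoeff : quarticInt.leadingCoeff = 157 := by
  have hdeg : quarticInt.natDegree = 4 := by unfold quarticInt; compute_degree!
  rw [leadingCoeff, hdeg]
  simp [quarticInt, coeff_X]

theorem quarticInt_map_zmod_five :
    quarticInt.map (Int.castRingHom (ZMod 5)) = C 2 * quarticModFive := by
  simp only [quarticInt, quarticModFive, Polynomial.map_add, Polynomial.map_mul,
    Polynomial.map_pow, Polynomial.map_X, Polynomial.map_ofNat]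
  reduce_mod_char
  rw [map_ofNat C 2]
  ring

theorem quarticModFive_irreducible : Irreducible quarticModFive := by
  have eval_eq (x : ZMod 5) : quarticModFive.eval x = x ^ 4 + x ^ 3 + x ^ 2 + 1 := by
    simp [quarticModFive]
  apply Monic.irreducible_of_natDegree_eq_four
  · unfold quarticModFive; monicity!
  · unfold quarticModFive; compute_degree!
  · intro x
    rw [eval_eq]
    revert x
    decide
  · intro a b c d h
    have no_quadratic_factor : ∀ a b c d : ZMod 5, ∃ x : ZMod 5,
        x ^ 4 + x ^ 3 + x ^ 2 + 1 ≠ (x ^ 2 + a * x + b) * (x ^ 2 + c * x + d) := by decide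
    obtain ⟨x, hx⟩ := no_quadratic_factor a b c d
    exact hx (by simpa [eval_eq] using congrArg (eval x) h)

/-- The quartic polynomial p(t) = 157t^4 + 2842t^3 + 19212t^2 + 57990t + 67147
    is irreducible over ℚ. -/
theorem quartic_irreducible :
    Irreducible
      (157 * X ^ 4 + 2842 * X ^ 3 + 19212 * X ^ 2 + 57990 * X + 67147 :
        Polynomial ℚ) := by
  have h_mod_five : Irreducible (quarticInt.map (Int.castRingHom (ZMod 5))) := by
    rw [quarticInt_map_zmod_five, irreducible_isUnit_mul (isUnit_C.mpr (by decide))]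
    exact quarticModFive_irreducible
  have h_int : Irreducible quarticInt :=
    quarticInt_isPrimitive.irreducible_of_irreducible_map_of_map_leadingCoeff_ne_zero
      (by rw [quarticInt_leadingCoeff]; decide) h_mod_five
  have h_rat := (IsPrimitive.Int.irreducible_iff_irreducible_map_cast quarticInt_isPrimitive).mp h_int
  simpa [quarticInt] using h_rat
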